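/- Let $V$ be a graded-commutative $\mathbb{C}$-algebra of the form $A^{\otimes k}$ where $A = \mathbb{C}[x]/(x^2)$ with $x$ in degree 2 (modeling the subalgebra of $H^*((M_0)^k,\mathbb{C})$ generated by the classes $x_i = p_i^*c_1(T^{1,0}M_0)$, which satisfy $x_i^2 = 0$ and are linearly independent). Let $e_j$ denote the $j$-th elementary symmetric polynomial in $x_1, \dots, x_k$. Then for every multi-index $K = (k_1, \dots, k_m)$ with $1 \leq k_1 + \cdots + k_m \leq k$, the product $e_{k_1} \cdots e_{k_m}$ is nonzero in $V$. -/
import Mathlib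


open scoped TensorProduct

set_option synthInstance.maxHeartbeats 1000000
set_option maxHeartbeats 1000000

namespace Stmt10Aux

noncomputable def c (k : ℕ) (S : Finset (Fin k)) : ⨂[ℂ] _i : Fin k, DualNumber ℂ :=
  PiTensorProduct.tprod ℂ (fun j => if j ∈ S then DualNumber.eps else 1)

lemma c_mul (k : ℕ) (S T : Finset (Fin k)) :
    c k S * c k T = if Disjoint S T then c k (S ∪ T) else 0 := by
  rw [c, c, PiTensorProduct.tprod_mul_tprod (R := ℂ)]
  split_ifs with h
  · rw [c]
    congr 1
    funext j
    simp only [Pi.mul_def]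
    by_cases hS : j ∈ S <;> by_cases hT : j ∈ T
    · exact absurd hT (Finset.disjoint_left.mp h hS)
    · simp [hS, hT, Finset.mem_union]
    · simp [hS, hT, Finset.mem_union]
    · simp [hS, hT, Finset.mem_union]
  · rw [Finset.not_disjoint_iff] at h
    obtain ⟨j, hjS, hjT⟩ := h
    exact MultilinearMap.map_coord_zero _ j (by simp [hjS, hjT, DualNumber.eps_mul_eps])

lemma prod_c (k : ℕ) (S : Finset (Fin k)) :
    (∏ i ∈ S, PiTensorProduct.tprod ℂ
        (fun j => if j = i then DualNumber.eps else (1 : DualNumber ℂ))) = c k S := by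
  induction S using Finset.cons_induction with
  | empty =>
    rw [Finset.prod_empty, c]
    simp only [Finset.notMem_empty, if_false]
    rfl
  | cons a S ha ih =>
    rw [Finset.prod_cons, ih]
    have h1 : (PiTensorProduct.tprod ℂ
        (fun j => if j = a then DualNumber.eps else (1 : DualNumber ℂ))) = c k {a} := by
      rw [c]; congr 1; funext j; simp [Finset.mem_singleton]
    rw [h1, c_mul, if_pos (Finset.disjoint_singleton_left.mpr ha), Finset.cons_eq_insert,
      Finset.insert_eq]

noncomputable def E (k n : ℕ) : ⨂[ℂ] _i : Fin k, DualNumber ℂ :=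
  ∑ S ∈ Finset.powersetCard n (Finset.univ : Finset (Fin k)), c k S

lemma E_zero (k : ℕ) : E k 0 = 1 := by
  rw [E, Finset.powersetCard_zero, Finset.sum_singleton, c]
  have h : (fun j => if j ∈ (∅ : Finset (Fin k)) then DualNumber.eps else (1 : DualNumber ℂ))
      = (1 : Π _ : Fin k, DualNumber ℂ) := by
    funext j; simp
  rw [h, ← PiTensorProduct.one_def]

lemma E_mul (k a b : ℕ) :
    E k a * E k b = ((a + b).choose a : ℂ) • E k (a + b) := by
  rw [E, E, E, PiTensorProduct.mul_def]
  simp only [map_sum, LinearMap.sum_apply]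
  simp only [← PiTensorProduct.mul_def, c_mul]
  rw [← Finset.sum_product']
  rw [Finset.sum_ite, Finset.sum_const_zero, add_zero]
  rw [Finset.smul_sum]
  rw [Finset.sum_nbij' (i := fun p => (⟨p.2 ∪ p.1, p.2⟩ :
        (_ : Finset (Fin k)) × Finset (Fin k)))
      (j := fun q => (q.1 \ q.2, q.2))
      (t := (Finset.powersetCard (a + b) (Finset.univ : Finset (Fin k))).sigma
        (fun T => Finset.powersetCard a T))
      (g := fun q => c k q.1)]
  · rw [Finset.sum_sigma]
    refine Finset.sum_congr rfl (fun T hT => ?_)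
    dsimp only
    rw [Finset.sum_const, Finset.card_powersetCard, (Finset.mem_powersetCard.mp hT).2,
      Nat.cast_smul_eq_nsmul]
  · intro p hp
    simp only [Finset.mem_filter, Finset.mem_product, Finset.mem_powersetCard] at hp
    obtain ⟨⟨⟨_, hcb⟩, ⟨_, hca⟩⟩, hd⟩ := hp
    simp only [Finset.mem_sigma, Finset.mem_powersetCard]
    exact ⟨⟨Finset.subset_univ _, by rw [Finset.card_union_of_disjoint hd, hca, hcb]⟩,
      ⟨Finset.subset_union_left, hca⟩⟩
  · intro q hq
    simp only [Finset.mem_sigma, Finset.mem_powersetCard] at hq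
    obtain ⟨⟨_, hcU⟩, hsub, hca⟩ := hq
    simp only [Finset.mem_filter, Finset.mem_product, Finset.mem_powersetCard]
    refine ⟨⟨⟨Finset.subset_univ _, ?_⟩, ⟨Finset.subset_univ _, hca⟩⟩,
      Finset.disjoint_sdiff⟩
    rw [Finset.card_sdiff_of_subset hsub, hcU, hca, Nat.add_sub_cancel_left]
  · intro p hp
    simp only [Finset.mem_filter] at hp
    exact Prod.ext (Finset.union_sdiff_cancel_left hp.2) rfl
  · intro q hq
    simp only [Finset.mem_sigma, Finset.mem_powersetCard] at hq
    exact Sigma.ext (Finset.union_sdiff_of_subset hq.2.1) (by simp)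
  · intro p hp
    rfl

lemma E_ne_zero (k n : ℕ) (hn : n ≤ k) : E k n ≠ 0 := by
  obtain ⟨T₀, -, hT₀⟩ := Finset.exists_subset_card_eq
    (s := (Finset.univ : Finset (Fin k))) (n := n) (by simpa using hn)
  set f : Π _j : Fin k, DualNumber ℂ →ₗ[ℂ] ℂ := fun j =>
    if j ∈ T₀ then TrivSqZeroExt.sndHom ℂ ℂ else (TrivSqZeroExt.fstHom ℂ ℂ ℂ).toLinearMap
    with hf
  set φ := PiTensorProduct.lift ((MultilinearMap.mkPiAlgebra ℂ (Fin k) ℂ).compLinearMap f)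
    with hφ
  have hc : ∀ S : Finset (Fin k), φ (c k S) = if S = T₀ then 1 else 0 := by
    intro S
    rw [c, hφ, PiTensorProduct.lift.tprod]
    rw [MultilinearMap.compLinearMap_apply, MultilinearMap.mkPiAlgebra_apply]
    split_ifs with hS
    · subst hS
      refine Finset.prod_eq_one (fun j _ => ?_)
      by_cases hj : j ∈ S <;>
        simp [hf, hj, DualNumber.snd_eps, TrivSqZeroExt.fst_one]
    · have : ∃ j, (j ∈ S ∧ j ∉ T₀) ∨ (j ∉ S ∧ j ∈ T₀) := by
        by_contra hcon
        push_neg at hcon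
        exact hS (Finset.ext fun j => by
          have := hcon j; constructor <;> intro h <;> by_contra h' <;> tauto)
      obtain ⟨j, hj⟩ := this
      refine Finset.prod_eq_zero (Finset.mem_univ j) ?_
      rcases hj with ⟨h1, h2⟩ | ⟨h1, h2⟩ <;>
        simp [hf, h1, h2, DualNumber.fst_eps, TrivSqZeroExt.snd_one]
  have h1 : φ (E k n) = 1 := by
    rw [E, map_sum]
    rw [Finset.sum_congr rfl (fun S _ => hc S), Finset.sum_ite_eq',
      if_pos (Finset.mem_powersetCard.mpr ⟨Finset.subset_univ _, hT₀⟩)]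
  intro h0
  rw [h0, map_zero] at h1
  exact zero_ne_one h1

lemma E_prod (k : ℕ) (K : List ℕ) :
    ∃ M : ℕ, 0 < M ∧ (K.map (E k)).prod = (M : ℂ) • E k K.sum := by
  induction K with
  | nil =>
    exact ⟨1, one_pos, by simp [E_zero]⟩
  | cons a K ih =>
    obtain ⟨M, hM, hEq⟩ := ih
    refine ⟨M * (a + K.sum).choose a, Nat.mul_pos hM (Nat.choose_pos (Nat.le_add_right a K.sum)), ?_⟩
    have hcomm : E k a * ((M : ℂ) • E k K.sum) = (M : ℂ) • (E k a * E k K.sum) := by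
      rw [PiTensorProduct.mul_def, map_smul, ← PiTensorProduct.mul_def]
    rw [List.map_cons, List.prod_cons, hEq, hcomm, E_mul, smul_smul, List.sum_cons,
      ← Nat.cast_mul]

end Stmt10Aux

/-- Algebraic core of Proposition 4.2: in `V = A^{⊗k}` where `A = ℂ[x]/(x²)` (modeling the
subalgebra of `H^*((M₀)^k, ℂ)` generated by the classes `xᵢ = pᵢ* c₁(T^{1,0}M₀)`, which square
to zero), with `e_j` the `j`-th elementary symmetric polynomial in `x₁, …, x_k`, every product
`e_{k₁} ⋯ e_{kₘ}` with `1 ≤ k₁ + ⋯ + kₘ ≤ k` is nonzero. -/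
theorem stmt10 (k : ℕ)
    (x : Fin k → (⨂[ℂ] _i : Fin k, DualNumber ℂ))
    (hx : ∀ i, x i = PiTensorProduct.tprod ℂ (fun j => if j = i then DualNumber.eps else 1))
    (e : ℕ → (⨂[ℂ] _i : Fin k, DualNumber ℂ))
    (he : ∀ j, e j = ∑ S ∈ Finset.powersetCard j (Finset.univ : Finset (Fin k)),
      ∏ i ∈ S, x i)
    (K : List ℕ) (hpos : ∀ a ∈ K, 0 < a) (h1 : 1 ≤ K.sum) (hk : K.sum ≤ k) :
    (K.map e).prod ≠ 0 := by
  have hE : e = Stmt10Aux.E k := by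
    funext j
    rw [he, Stmt10Aux.E]
    refine Finset.sum_congr rfl (fun S _ => ?_)
    rw [← Stmt10Aux.prod_c]
    exact Finset.prod_congr rfl (fun i _ => by rw [hx])
  rw [hE]
  obtain ⟨M, hM, hEq⟩ := Stmt10Aux.E_prod k K
  rw [hEq]
  exact smul_ne_zero (Nat.cast_ne_zero.mpr hM.ne') (Stmt10Aux.E_ne_zero k _ hk)
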